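/- arXiv:1506.03293 — 2 statements merged into one kernel-verified Lean document; each statement's English description precedes it below -/
import Mathlib

section
/- For every δ > 0 and every fixed k, for all sufficiently large n: ℙ( Σ_{j=⌈(1−δ²)m⌉}^{m−1} ψ_{j,z} ≤ (5/2) δ log N for all z ∈ V_N ) ≥ 1 − 2e^{−n/10}. -/
open MeasureTheory ProbabilityTheory Real Filter
open scoped NNReal ENNReal Classical

noncomputable section

abbrev Vertex : Type := ℤ × ℤ

/-- ℓ∞ distance on ℤ². -/
def dinf (u v : Vertex) : ℤ := max |u.1 - v.1| |u.2 - v.2|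

/-- Rectangle of lattice points with lower-left corner `c`, width `w`, height `h`. -/
def rectAt (c : Vertex) (w h : ℕ) : Finset Vertex :=
  Finset.Icc c (c.1 + w - 1, c.2 + h - 1)

/-- Lattice box with lower-left corner `c` and side length `s`. -/
def boxAt (c : Vertex) (s : ℕ) : Finset Vertex := rectAt c s s

/-- The box `V_N` of side length `N` with lower-left corner at the origin. -/
def vbox (N : ℕ) : Finset Vertex := boxAt (0, 0) N

/-- The concentric box `B*` of side length `3s` around the box with corner `c` and side `s`. -/
def starBox (c : Vertex) (s : ℕ) : Finset Vertex := boxAt (c.1 - s, c.2 - s) (3 * s)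

/-- Lower-left corners of the lattice boxes of side length `2^j` containing `z`. -/
def corners (j : ℕ) (z : Vertex) : Finset Vertex :=
  Finset.Icc (z.1 - 2 ^ j + 1, z.2 - 2 ^ j + 1) z

/-- ψ_{j,z} = Σ_{B ∈ 𝓑_{jk}(z)} √k b_{jk,B}. -/
def psi {Ω : Type} (b : ℕ × Vertex → Ω → ℝ) (k j : ℕ) (z : Vertex) (ω : Ω) : ℝ :=
  ∑ c ∈ corners (j * k) z, Real.sqrt k * b (j * k, c) ω

/-- The K-coarse MBRW φ_{N,z} = Σ_{j=0}^{m-1} ψ_{j,z} with m = ⌊n/k⌋. -/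
def phi {Ω : Type} (b : ℕ × Vertex → Ω → ℝ) (n k : ℕ) (z : Vertex) (ω : Ω) : ℝ :=
  ∑ j ∈ Finset.range (n / k), psi b k j z ω

/-- The underlying field `b_{j,B}`: independent centered Gaussians, Var(b_{j,B}) = 2^{-2j},
indexed by the level `j` and the lower-left corner of the box `B`. -/
def GaussianSetup {Ω : Type} [MeasureSpace Ω] (b : ℕ × Vertex → Ω → ℝ) : Prop :=
  (∀ i, Measurable (b i)) ∧
  iIndepFun b ℙ ∧
  ∀ (j : ℕ) (c : Vertex), Measure.map (b (j, c)) ℙ = gaussianReal 0 (((2 : ℝ≥0) ^ (2 * j))⁻¹)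

/-- Nearest neighbors in ℤ². -/
def adj (u v : Vertex) : Prop := |u.1 - v.1| + |u.2 - v.2| = 1

/-- A path in `V_N`: a nonempty list of vertices of `V_N`, consecutive ones nearest neighbors. -/
def IsPathIn (N : ℕ) (P : List Vertex) : Prop :=
  P ≠ [] ∧ (∀ w ∈ P, w ∈ vbox N) ∧ P.Chain' adj

/-- The path `P` connects `u` to `v`. -/
def Connects (P : List Vertex) (u v : Vertex) : Prop :=
  P.head? = some u ∧ P.getLast? = some v

/-- FPP distance between `u, v ∈ V_N` for the vertex weights `exp (γ f w)`. -/
def fppOf (N : ℕ) (γ : ℝ) (f : Vertex → ℝ) (u v : Vertex) : ℝ :=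
  sInf {s : ℝ | ∃ P : List Vertex, IsPathIn N P ∧ Connects P u v ∧
    s = (P.map fun w => Real.exp (γ * f w)).sum}

/-- The LQG vertex weight e^{γ φ_{N,v}}. -/
def lqgWeight {Ω : Type} (b : ℕ × Vertex → Ω → ℝ) (n k : ℕ) (γ : ℝ) (v : Vertex) (ω : Ω) : ℝ :=
  Real.exp (γ * phi b n k v ω)

/-- μ_γ × μ_γ of the set of pairs satisfying `A`. -/
def muPair {Ω : Type} (b : ℕ × Vertex → Ω → ℝ) (n k : ℕ) (γ : ℝ)
    (A : Vertex × Vertex → Prop) (ω : Ω) : ℝ :=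
  (∑ p ∈ vbox (2 ^ n) ×ˢ vbox (2 ^ n),
      Set.indicator {p | A p} (fun p => lqgWeight b n k γ p.1 ω * lqgWeight b n k γ p.2 ω) p) /
    (∑ w ∈ vbox (2 ^ n), lqgWeight b n k γ w ω) ^ 2

/-- μ_γ of the set of vertices satisfying `A`. -/
def muSet {Ω : Type} (b : ℕ × Vertex → Ω → ℝ) (n k : ℕ) (γ : ℝ)
    (A : Vertex → Prop) (ω : Ω) : ℝ :=
  (∑ v ∈ vbox (2 ^ n), Set.indicator {v | A v} (fun v => lqgWeight b n k γ v ω) v) /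
    ∑ w ∈ vbox (2 ^ n), lqgWeight b n k γ w ω

/-- σ_{z,w} = E[φ_{N,z} φ_{N,w}]. -/
def covPhi {Ω : Type} [MeasureSpace Ω] (b : ℕ × Vertex → Ω → ℝ) (n k : ℕ) (z w : Vertex) : ℝ :=
  ∫ ω, phi b n k z ω * phi b n k w ω ∂ℙ

/-- Maximum of `f` over a finite set of vertices (as an `sSup`). -/
def fmax (B : Finset Vertex) (f : Vertex → ℝ) : ℝ := sSup (f '' ↑B)

def jzero (δ : ℝ) (n k : ℕ) : ℕ := ⌊(1 - δ ^ 2 / 2) * ((n / k : ℕ) : ℝ)⌋₊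
def Kone (k : ℕ) : ℕ := 2 ^ (k - 2)
def Ktwo (k q : ℕ) : ℕ := 2 ^ k / (q + 1)
def lzero (δ : ℝ) (n k : ℕ) : ℕ := k * ⌊δ ^ 2 * ((n / k : ℕ) : ℝ)⌋₊
def lone (δ κ : ℝ) (n k : ℕ) : ℕ :=
  Nat.log 2 (⌈((2 : ℝ) ^ n) ^ ((1 : ℝ) - 2 * κ)⌉₊ + 2 ^ (lzero δ n k + 1)) - 1

/-- A q-dependent {0,1}-valued field on `V_N` with ℙ(ξ_w = 1) ≥ p. -/
def BernoulliField {Ω : Type} [MeasureSpace Ω] (ξ : Vertex → Ω → ℝ) (N q : ℕ) (p : ℝ) : Prop :=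
  (∀ w, Measurable (ξ w)) ∧
  (∀ w ω, ξ w ω = 0 ∨ ξ w ω = 1) ∧
  (∀ A B : Set Vertex, (∀ z ∈ A, ∀ w ∈ B, (q : ℤ) < dinf z w) →
      IndepFun (fun ω (z : A) => ξ z ω) (fun ω (w : B) => ξ w ω) ℙ) ∧
  (∀ w ∈ vbox N, ENNReal.ofReal p ≤ ℙ {ω | ξ w ω = 1})

/-- The Bernoulli field together with its independence from the Gaussian field. -/
def BernoulliSetup {Ω : Type} [MeasureSpace Ω] (b : ℕ × Vertex → Ω → ℝ)
    (ξ : Vertex → Ω → ℝ) (N q : ℕ) (p : ℝ) : Prop :=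
  BernoulliField ξ N q p ∧
  IndepFun (fun ω (i : ℕ × Vertex) => b i ω) (fun ω (w : Vertex) => ξ w ω) ℙ

/-- A good path: open, and all Gaussian values at most 7δ log N. -/
def GoodPath {Ω : Type} (b : ℕ × Vertex → Ω → ℝ) (ξ : Vertex → Ω → ℝ) (n k : ℕ)
    (δ : ℝ) (P : List Vertex) (ω : Ω) : Prop :=
  (∀ w ∈ P, ξ w ω = 1) ∧ ∀ w ∈ P, phi b n k w ω ≤ 7 * δ * Real.log (2 ^ n)

/-- A `B`-crossing for the box with corner `c` and side `L`: a good top-bottom crossing `Q^V`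
of `B` with `|Q^V| ≤ 4 L^{1+δ}`, and a good left-right crossing `Q^H` of the 4L × L rectangle
`ÁB` with `|Q^H| ≤ 16 L^{1+δ}`. -/
def CrossingAt {Ω : Type} (b : ℕ × Vertex → Ω → ℝ) (ξ : Vertex → Ω → ℝ) (n k : ℕ)
    (δ : ℝ) (c : Vertex) (L : ℕ) (ω : Ω) : Prop :=
  (∃ QV : List Vertex, QV ≠ [] ∧ QV.Chain' adj ∧ (∀ w ∈ QV, w ∈ boxAt c L) ∧
      (∃ u, QV.head? = some u ∧ u.2 = c.2 + L - 1) ∧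
      (∃ v, QV.getLast? = some v ∧ v.2 = c.2) ∧
      ((QV.length : ℝ) ≤ 4 * (L : ℝ) ^ ((1 : ℝ) + δ)) ∧ GoodPath b ξ n k δ QV ω) ∧
  (∃ QH : List Vertex, QH ≠ [] ∧ QH.Chain' adj ∧ (∀ w ∈ QH, w ∈ rectAt c (4 * L) L) ∧
      (∃ u, QH.head? = some u ∧ u.1 = c.1) ∧
      (∃ v, QH.getLast? = some v ∧ v.1 = c.1 + 4 * L - 1) ∧
      ((QH.length : ℝ) ≤ 16 * (L : ℝ) ^ ((1 : ℝ) + δ)) ∧ GoodPath b ξ n k δ QH ω)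

/-- Regression coefficient a_z (and, with `u`, `v` swapped, b_z). -/
def acoef {Ω : Type} [MeasureSpace Ω] (b : ℕ × Vertex → Ω → ℝ) (n k : ℕ)
    (u v z : Vertex) : ℝ :=
  (((k * (n / k) : ℕ) : ℝ) * covPhi b n k z u - covPhi b n k z v * covPhi b n k u v) /
    ((((k * (n / k) : ℕ) : ℝ)) ^ 2 - covPhi b n k u v ^ 2)

/-!
For fixed `z`, the sum `∑_{j=a}^{m-1} ψ_{j,z}` is a sum of independent centred Gaussians whose
variances add up to `k (m - a) ≤ δ² n`, so the Chernoff bound bounds its upper tail at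
`t = (5/2) δ log N` by `exp (-t² / (2 δ² n)) = exp (-(25/8) (log 2)² n)`. A union bound over the
`4^n` vertices of `V_N` then leaves `4^n exp (-(25/8) (log 2)² n) ≤ exp (-n/10)`.
-/

namespace ProbabilityTheory

variable {Ω : Type*} {mΩ : MeasurableSpace Ω} {μ : Measure Ω} {X : Ω → ℝ}

lemma HasSubgaussianMGF.mono {c c' : ℝ≥0} (h : HasSubgaussianMGF X c μ) (hc : c ≤ c') :
    HasSubgaussianMGF X c' μ where
  integrable_exp_mul := h.integrable_exp_mul
  mgf_le t := (h.mgf_le t).trans (exp_le_exp.2 (by gcongr))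

lemma hasSubgaussianMGF_of_map_eq_gaussianReal {v : ℝ≥0} (hX : AEMeasurable X μ)
    (hmap : μ.map X = gaussianReal 0 v) : HasSubgaussianMGF X v μ := by
  rw [← HasSubgaussianMGF.id_map_iff hX, hmap]
  exact ⟨fun t ↦ integrable_exp_mul_gaussianReal t, fun t ↦ by simp [mgf_id_gaussianReal]⟩

lemma one_sub_card_mul_le_measureReal_forall_le [IsProbabilityMeasure μ] {ι : Type*}
    (S : Finset ι) (Y : ι → Ω → ℝ) {t p : ℝ} (hY : ∀ i ∈ S, μ.real {ω | t ≤ Y i ω} ≤ p) :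
    1 - S.card * p ≤ μ.real {ω | ∀ i ∈ S, Y i ω ≤ t} := by
  set E := {ω | ∀ i ∈ S, Y i ω ≤ t}
  have hcompl : Eᶜ ⊆ ⋃ i ∈ S, {ω | t ≤ Y i ω} := by
    intro ω hω
    obtain ⟨i, hi, hlt⟩ : ∃ i ∈ S, t < Y i ω := by simpa [E] using hω
    exact Set.mem_biUnion hi hlt.le
  calc 1 - S.card * p
      ≤ 1 - ∑ i ∈ S, μ.real {ω | t ≤ Y i ω} := by
        rw [← nsmul_eq_mul, ← Finset.sum_const]; gcongr with i hi; exact hY i hi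
    _ ≤ 1 - μ.real Eᶜ := by
        gcongr
        exact (measureReal_mono hcompl (measure_ne_top _ _)).trans
          (measureReal_biUnion_finset_le _ _)
    _ ≤ μ.real E := by
        have := measureReal_union_le (μ := μ) E Eᶜ
        rw [Set.union_compl_self, probReal_univ] at this
        linarith

end ProbabilityTheory

lemma card_corners (J : ℕ) (z : Vertex) : (corners J z).card = 2 ^ J * 2 ^ J := by
  have hside : ∀ w : ℤ, (Finset.Icc (w - 2 ^ J + 1) w).card = 2 ^ J := fun w ↦ by
    rw [Int.card_Icc, show w + 1 - (w - 2 ^ J + 1) = ((2 ^ J : ℕ) : ℤ) by push_cast; ring,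
      Int.toNat_natCast]
  rw [corners, Finset.card_Icc_prod, hside, hside]

lemma card_vbox (N : ℕ) : (vbox N).card = N * N := by
  rw [vbox, boxAt, rectAt, Finset.card_Icc_prod]
  norm_num

-- Level `j` contributes `4^{jk}` independent Gaussians of variance `k 4^{-jk}`, i.e. variance `k`.
lemma hasSubgaussianMGF_sum_psi {Ω : Type} [MeasureSpace Ω] {b : ℕ × Vertex → Ω → ℝ}
    (hb : GaussianSetup b) (k : ℕ) (s : Finset ℕ) (z : Vertex) :
    HasSubgaussianMGF (fun ω ↦ ∑ j ∈ s, psi b k j z ω) (k * s.card) ℙ := by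
  obtain ⟨hmeas, hindep, hmap⟩ := hb
  have := hindep.isProbabilityMeasure
  rcases Nat.eq_zero_or_pos k with rfl | hk
  · simp [psi]
  set g : (Σ _ : ℕ, Vertex) → ℕ × Vertex := fun i ↦ (i.1 * k, i.2)
  have hg : g.Injective := fun i i' h ↦ by
    simp only [g, Prod.mk.injEq] at h
    exact Sigma.ext (Nat.eq_of_mul_eq_mul_right hk h.1) (heq_of_eq h.2)
  have hY : ∀ i, HasSubgaussianMGF (fun ω ↦ √k * b (g i) ω)
      (k * ((2 : ℝ≥0) ^ (2 * (i.1 * k)))⁻¹) ℙ := fun i ↦ by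
    have hsq : (⟨√k ^ 2, sq_nonneg _⟩ : ℝ≥0) = k := NNReal.eq (Real.sq_sqrt k.cast_nonneg)
    have h := (hasSubgaussianMGF_of_map_eq_gaussianReal
      (hmeas (g i)).aemeasurable (hmap _ _)).const_mul √k
    rwa [hsq] at h
  have hsum := HasSubgaussianMGF.sum_of_iIndepFun
    ((hindep.precomp hg).comp (fun _ x ↦ √k * x) fun _ ↦ by fun_prop)
    (s := s.sigma fun j ↦ corners (j * k) z) fun i _ ↦ hY i
  have hc : ∑ i ∈ s.sigma (fun j ↦ corners (j * k) z),
      (k * ((2 : ℝ≥0) ^ (2 * (i.1 * k)))⁻¹ : ℝ≥0) = k * s.card := by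
    rw [mul_comm, ← nsmul_eq_mul, ← Finset.sum_const, Finset.sum_sigma]
    refine Finset.sum_congr rfl fun j _ ↦ ?_
    simp only [Finset.sum_const, card_corners, nsmul_eq_mul, two_mul, pow_add]
    push_cast
    field_simp
  rw [hc] at hsum
  simpa only [psi, Finset.sum_sigma, Function.comp_apply, g] using hsum

lemma measureReal_sum_psi_ge_le {Ω : Type} [MeasureSpace Ω] {b : ℕ × Vertex → Ω → ℝ}
    (hb : GaussianSetup b) (k : ℕ) (s : Finset ℕ) (z : Vertex) {t V : ℝ} (ht : 0 ≤ t)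
    (hV : k * s.card ≤ V) :
    Measure.real ℙ {ω | t ≤ ∑ j ∈ s, psi b k j z ω} ≤ exp (-t ^ 2 / (2 * V)) := by
  have hV0 : 0 ≤ V := (by positivity : (0 : ℝ) ≤ k * s.card).trans hV
  have hV' : (k * s.card : ℝ≥0) ≤ V.toNNReal := by
    rw [← NNReal.coe_le_coe, Real.coe_toNNReal V hV0]
    exact_mod_cast hV
  have h := ((hasSubgaussianMGF_sum_psi hb k s z).mono hV').measure_ge_le ht
  rwa [Real.coe_toNNReal V hV0] at h

lemma mul_card_Ico_ceil_one_sub_mul_le {ε : ℝ} (hε : 0 ≤ ε) (k n : ℕ) :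
    (k * (Finset.Ico ⌈(1 - ε) * ((n / k : ℕ) : ℝ)⌉₊ (n / k)).card : ℝ) ≤ ε * n := by
  have hcard : ((Finset.Ico ⌈(1 - ε) * ((n / k : ℕ) : ℝ)⌉₊ (n / k)).card : ℝ) ≤
      ε * (n / k : ℕ) := by
    rw [Nat.card_Ico]
    rcases le_total (n / k) ⌈(1 - ε) * ((n / k : ℕ) : ℝ)⌉₊ with h | h
    · rw [Nat.sub_eq_zero_of_le h, Nat.cast_zero]
      positivity
    · rw [Nat.cast_sub h]
      linarith [Nat.le_ceil ((1 - ε) * ((n / k : ℕ) : ℝ))]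
  calc (k * _ : ℝ) ≤ k * (ε * (n / k : ℕ)) := by gcongr
    _ = ε * (k * (n / k) : ℕ) := by push_cast; ring
    _ ≤ ε * n := by gcongr; exact_mod_cast Nat.mul_div_le n k

lemma four_pow_mul_exp_le (n : ℕ) :
    (4 : ℝ) ^ n * exp (-(25 / 8 * log 2 ^ 2 * n)) ≤ exp (-n / 10) := by
  have hfour : (4 : ℝ) ^ n = exp (2 * log 2 * n) := by
    rw [show (4 : ℝ) = 2 ^ 2 by norm_num, ← pow_mul, ← exp_log (pow_pos two_pos _), log_pow]
    push_cast
    ring_nf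
  -- `25/8 (log 2)^2 - 2 log 2 ≈ 0.1152 > 1/10`
  have hcoef : 2 * log 2 - 25 / 8 * log 2 ^ 2 ≤ -1 / 10 := by
    nlinarith [log_two_gt_d9, log_two_lt_d9]
  rw [hfour, ← exp_add, exp_le_exp]
  nlinarith [hcoef, (Nat.cast_nonneg n : (0 : ℝ) ≤ n)]

theorem statement5_general {Ω : Type} [MeasureSpace Ω] [IsProbabilityMeasure (ℙ : Measure Ω)]
    (b : ℕ × Vertex → Ω → ℝ) (hb : GaussianSetup b)
    (δ : ℝ) (hδ : 0 < δ) (k : ℕ) :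
    ∀ᶠ n : ℕ in atTop,
      ℙ {ω | ∀ z ∈ vbox (2 ^ n),
            ∑ j ∈ Finset.Ico (⌈(1 - δ ^ 2) * ((n / k : ℕ) : ℝ)⌉₊) (n / k), psi b k j z ω ≤
              5 / 2 * δ * Real.log (2 ^ n)}
        ≥ ENNReal.ofReal (1 - 2 * Real.exp (-(n : ℝ) / 10)) := by
  filter_upwards [eventually_ge_atTop 1] with n hn
  set s := Finset.Ico (⌈(1 - δ ^ 2) * ((n / k : ℕ) : ℝ)⌉₊) (n / k)
  set t := 5 / 2 * δ * Real.log (2 ^ n)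
  have hlog : log (2 ^ n) = n * log 2 := Real.log_pow _ _
  have ht : 0 ≤ t := by simp only [t, hlog]; positivity
  have hn_pos : (0 : ℝ) < n := by exact_mod_cast hn
  have htail : ∀ z, Measure.real ℙ {ω | t ≤ ∑ j ∈ s, psi b k j z ω} ≤
      exp (-(25 / 8 * log 2 ^ 2 * n)) := fun z ↦ by
    refine (measureReal_sum_psi_ge_le hb k s z ht
      (mul_card_Ico_ceil_one_sub_mul_le (sq_nonneg δ) k n)).trans_eq ?_
    simp only [t, hlog]
    congr 1
    field_simp
    ring
  have hunion := one_sub_card_mul_le_measureReal_forall_le (vbox (2 ^ n))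
    (fun z ω ↦ ∑ j ∈ s, psi b k j z ω) fun z _ ↦ htail z
  have hcard : ((vbox (2 ^ n)).card : ℝ) = 4 ^ n := by
    rw [card_vbox, Nat.cast_mul, Nat.cast_pow, ← mul_pow]
    norm_num
  rw [ge_iff_le, ← ofReal_measureReal]
  refine ENNReal.ofReal_le_ofReal (le_trans ?_ hunion)
  rw [hcard]
  linarith [four_pow_mul_exp_le n, exp_pos (-n / 10 : ℝ)]

/-- **Lemma 2.3, first part.** For all large n, with probability at least 1 - 2e^{-n/10},
Σ_{j=⌈(1-δ²)m⌉}^{m-1} ψ_{j,z} ≤ (5/2) δ log N simultaneously for all z ∈ V_N. -/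
theorem statement5 {Ω : Type} [MeasureSpace Ω] [IsProbabilityMeasure (ℙ : Measure Ω)]
    (b : ℕ × Vertex → Ω → ℝ) (hb : GaussianSetup b)
    (δ : ℝ) (hδ : 0 < δ) (k : ℕ) (hk : 1 ≤ k) :
    ∀ᶠ n : ℕ in atTop,
      ℙ {ω | ∀ z ∈ vbox (2 ^ n),
            ∑ j ∈ Finset.Ico (⌈(1 - δ ^ 2) * ((n / k : ℕ) : ℝ)⌉₊) (n / k), psi b k j z ω ≤
              5 / 2 * δ * Real.log (2 ^ n)}
        ≥ ENNReal.ofReal (1 - 2 * Real.exp (-(n : ℝ) / 10)) :=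
  statement5_general b hb δ hδ k

end
end

section
/- Let δ ∈ (0,1), κ ∈ (0, δ²/2), and let q ≥ 1 be an integer. There exists k′(q) such that for all k ≥ k′(q) and all sufficiently large n the following deterministic statement holds: for every path P in V_N of distance at least N^{1−κ}, there exist a set of vertices Q ⊆ P and boxes B_{j,h} ∈ 𝓑𝓓_{jk}, for 1 ≤ j ≤ j₀ and 1 ≤ h ≤ K₁^{j₀−j}, such that (a) any two distinct points of Q have ℓ∞-distance greater than q; (b) for every 1 ≤ j ≤ j₀ − 1 and all h ≠ h′, d(B*_{j,h}, B*_{j,h′}) > 2^{jk}; (c) |Q| = K₁^{j₀−1} K₂, and for every 1 ≤ j ≤ j₀, Q = ⋃_{h=1}^{K₁^{j₀−j}} (Q ∩ B*_{j,h}) with |Q ∩ B*_{j,h}| = K₁^{j−1} K₂ for every h. -/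
open MeasureTheory ProbabilityTheory Real Filter
open scoped NNReal ENNReal Classical

noncomputable section

/-!
The nest is built recursively along the path, cut at its first exit from the `ℓ∞`-ball of radius
`2^{j₀k} - 2^{(j₀-1)k}` around its starting point; the path is long enough for this because
`j₀ k ≤ (1 - δ²/2) n ≤ (1 - κ) n`.

A walk that exits the ball of radius `2^{(j+1)k} - 2^{jk}` moves that far in one signed
coordinate, so it crosses the `K₁ = 2^{k-2}` levels `A + 4c · 2^{jk}`, `c < K₁`, with
`A ∈ 2^{jk} ℤ`. From each crossing the walk goes on until it exits the ball of radius
`2^{jk} - 2^{(j-1)k}`, and carries a child nest of depth `j` anchored at the crossing. The anchors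
are `4 · 2^{jk}` apart and on the grid in that coordinate, which keeps the star boxes of different
children more than their side length apart. At depth one the walk provides `K₂` points whose
signed coordinates are `q + 1` apart.
-/

/-! ### ℓ∞ geometry of boxes -/

def coord : Bool → Vertex → ℤ
  | true, v => v.1
  | false, v => v.2

lemma abs_coord_sub_le_dinf (e : Bool) (u v : Vertex) : |coord e u - coord e v| ≤ dinf u v := by
  cases e
  · exact le_max_right _ _
  · exact le_max_left _ _

lemma exists_abs_coord_sub_eq_dinf (u v : Vertex) : ∃ e, |coord e u - coord e v| = dinf u v := by
  rcases max_choice |u.1 - v.1| |u.2 - v.2| with h | h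
  · exact ⟨true, h.symm⟩
  · exact ⟨false, h.symm⟩

lemma dinf_self (u : Vertex) : dinf u u = 0 := by simp [dinf]

lemma dinf_comm (u v : Vertex) : dinf u v = dinf v u := by
  simp only [dinf, abs_sub_comm]

lemma dinf_triangle (u v w : Vertex) : dinf u w ≤ dinf u v + dinf v w :=
  max_le ((abs_sub_le _ _ _).trans (add_le_add (le_max_left _ _) (le_max_left _ _)))
    ((abs_sub_le _ _ _).trans (add_le_add (le_max_right _ _) (le_max_right _ _)))

lemma dinf_le_of_adj {u v : Vertex} (h : adj u v) : dinf u v ≤ 1 := by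
  unfold adj at h
  exact max_le (by linarith [abs_nonneg (u.2 - v.2)]) (by linarith [abs_nonneg (u.1 - v.1)])

lemma mem_starBox_iff_coord {z c : Vertex} {s : ℕ} :
    z ∈ starBox c s ↔ ∀ e, coord e c - s ≤ coord e z ∧ coord e z ≤ coord e c + 2 * s - 1 := by
  simp only [starBox, boxAt, rectAt, Finset.mem_Icc, Prod.le_def, Bool.forall_bool, coord]
  push_cast
  omega

/-- The lower-left corner of the box of `𝓑𝓓` of side `s` containing `v`. -/
def alignedCorner (s : ℕ) (v : Vertex) : Vertex := (s * (v.1 / s), s * (v.2 / s))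

lemma exists_alignedCorner_two_pow_eq (n : ℕ) (v : Vertex) :
    ∃ c : ℤ × ℤ, alignedCorner (2 ^ n) v = (2 ^ n * c.1, 2 ^ n * c.2) :=
  ⟨(v.1 / 2 ^ n, v.2 / 2 ^ n), by simp [alignedCorner]⟩

lemma coord_alignedCorner (s : ℕ) (v : Vertex) (e : Bool) :
    coord e (alignedCorner s v) = s * (coord e v / s) := by
  cases e <;> rfl

lemma coord_alignedCorner_mem_Ico {s : ℕ} (hs : 0 < s) (v : Vertex) (e : Bool) :
    coord e (alignedCorner s v) ≤ coord e v ∧ coord e v < coord e (alignedCorner s v) + s := by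
  rw [coord_alignedCorner]
  have hs' : (0 : ℤ) < s := by exact_mod_cast hs
  exact ⟨Int.mul_ediv_self_le hs'.ne', Int.lt_mul_ediv_self_add hs'⟩

lemma mem_starBox_alignedCorner {s : ℕ} (hs : 0 < s) {z p : Vertex} (h : dinf z p ≤ s) :
    z ∈ starBox (alignedCorner s p) s := by
  rw [mem_starBox_iff_coord]
  intro e
  have hzp := abs_le.mp ((abs_coord_sub_le_dinf e z p).trans h)
  have := coord_alignedCorner_mem_Ico hs p e
  omega

lemma dinf_le_of_mem_starBox_alignedCorner {s : ℕ} (hs : 0 < s) {z p : Vertex}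
    (h : z ∈ starBox (alignedCorner s p) s) : dinf z p ≤ 2 * s - 1 := by
  obtain ⟨e, he⟩ := exists_abs_coord_sub_eq_dinf z p
  have hz := mem_starBox_iff_coord.mp h e
  have := coord_alignedCorner_mem_Ico hs p e
  rw [← he, abs_le]
  omega

lemma coord_mem_of_mem_starBox_alignedCorner {s : ℕ} {z p : Vertex} {e : Bool}
    (hdvd : (s : ℤ) ∣ coord e p) (h : z ∈ starBox (alignedCorner s p) s) :
    coord e p - s ≤ coord e z ∧ coord e z ≤ coord e p + 2 * s - 1 := by
  have hz := mem_starBox_iff_coord.mp h e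
  rwa [coord_alignedCorner, Int.mul_ediv_cancel' hdvd] at hz

lemma subset_starBox_alignedCorner {Q : Finset Vertex} {p : Vertex} {n : ℕ}
    (h : ∀ x ∈ Q, dinf x p ≤ 2 ^ n) : Q ⊆ starBox (alignedCorner (2 ^ n) p) (2 ^ n) :=
  fun x hx => mem_starBox_alignedCorner (Nat.two_pow_pos n) (by exact_mod_cast h x hx)

lemma dinf_le_of_mem_starBox_alignedCorner_two_pow {n : ℕ} {z p : Vertex}
    (h : z ∈ starBox (alignedCorner (2 ^ n) p) (2 ^ n)) : dinf z p ≤ 2 * 2 ^ n - 1 := by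
  exact_mod_cast dinf_le_of_mem_starBox_alignedCorner (Nat.two_pow_pos n) h

/-! ### Walks -/

theorem exists_first_hit {g : ℕ → ℤ} {a b : ℕ} {c : ℤ} (hab : a ≤ b)
    (hstep : ∀ t, a ≤ t → t < b → g (t + 1) ≤ g t + 1) (ha : g a ≤ c) (hb : c ≤ g b) :
    ∃ σ, a ≤ σ ∧ σ ≤ b ∧ g σ = c ∧ ∀ t, a ≤ t → t < σ → g t < c := by
  classical
  have hex : ∃ t, a ≤ t ∧ c ≤ g t := ⟨b, hab, hb⟩
  set σ := Nat.find hex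
  obtain ⟨haσ, hσ⟩ : a ≤ σ ∧ c ≤ g σ := Nat.find_spec hex
  have hbefore : ∀ t, a ≤ t → t < σ → g t < c := fun t hat htσ =>
    not_le.mp fun hct => Nat.find_min hex htσ ⟨hat, hct⟩
  have hσb : σ ≤ b := Nat.find_min' hex ⟨hab, hb⟩
  refine ⟨σ, haσ, hσb, ?_, hbefore⟩
  rcases haσ.eq_or_lt with h | h
  · exact le_antisymm (h ▸ ha) hσ
  · have hprev := hbefore (σ - 1) (by omega) (by omega)
    have hjump := hstep (σ - 1) (by omega) (by omega)
    rw [Nat.sub_add_cancel (by omega)] at hjump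
    omega

structure IsExitWalk (f : ℕ → Vertex) (a b : ℕ) (r : ℤ) : Prop where
  le : a ≤ b
  step : ∀ t, a ≤ t → t < b → dinf (f t) (f (t + 1)) ≤ 1
  stays : ∀ t, a ≤ t → t ≤ b → dinf (f t) (f a) ≤ r
  exits : dinf (f b) (f a) = r

lemma exists_hit_of_lipschitz {f : ℕ → Vertex} {a b : ℕ} (hab : a ≤ b)
    (hstep : ∀ t, a ≤ t → t < b → dinf (f t) (f (t + 1)) ≤ 1) {φ : Vertex → ℤ}
    (hφ : ∀ u v, φ u - φ v ≤ dinf u v) {c : ℤ} (ha : φ (f a) ≤ c) (hb : c ≤ φ (f b)) :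
    ∃ σ, a ≤ σ ∧ σ ≤ b ∧ φ (f σ) = c ∧ ∀ t, a ≤ t → t < σ → φ (f t) < c :=
  exists_first_hit (g := φ ∘ f) hab
    (fun t hat htb => by
      have := hφ (f (t + 1)) (f t)
      have := hstep t hat htb
      rw [dinf_comm] at this
      simp only [Function.comp]
      omega)
    ha hb

lemma exists_isExitWalk {f : ℕ → Vertex} {a b : ℕ} {r : ℤ} (hab : a ≤ b)
    (hstep : ∀ t, a ≤ t → t < b → dinf (f t) (f (t + 1)) ≤ 1) (hr : 0 ≤ r)
    (hb : r ≤ dinf (f b) (f a)) : ∃ β ≤ b, IsExitWalk f a β r := by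
  obtain ⟨β, haβ, hβb, hβ, hbefore⟩ := exists_hit_of_lipschitz hab hstep
    (φ := fun u => dinf u (f a))
    (fun u v => by have := dinf_triangle u v (f a); omega)
    (by simpa [dinf_self] using hr) hb
  refine ⟨β, hβb, haβ, fun t hat htβ => hstep t hat (by omega), fun t hat htβ => ?_, hβ⟩
  rcases htβ.eq_or_lt with rfl | h
  · exact hβ.le
  · exact (hbefore t hat h).le

lemma IsExitWalk.exists_signed_coord {f : ℕ → Vertex} {a b : ℕ} {r : ℤ}
    (hw : IsExitWalk f a b r) :
    ∃ (e : Bool) (ε : ℤ), (ε = 1 ∨ ε = -1) ∧ ε * coord e (f b) = ε * coord e (f a) + r := by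
  obtain ⟨e, he⟩ := exists_abs_coord_sub_eq_dinf (f b) (f a)
  rw [hw.exits] at he
  rcases abs_choice (coord e (f b) - coord e (f a)) with h | h
  · exact ⟨e, 1, .inl rfl, by rw [h] at he; linarith⟩
  · exact ⟨e, -1, .inr rfl, by rw [h] at he; linarith⟩

lemma abs_signed_coord_sub_le {ε : ℤ} (hε : ε = 1 ∨ ε = -1) (e : Bool) (u v : Vertex) :
    |ε * coord e u - ε * coord e v| ≤ dinf u v := by
  rw [← mul_sub, abs_mul]
  rcases hε with rfl | rfl <;> simpa using abs_coord_sub_le_dinf e u v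

lemma IsExitWalk.exists_signed_coord_hit {f : ℕ → Vertex} {a b : ℕ} {r : ℤ}
    (hw : IsExitWalk f a b r) {e : Bool} {ε : ℤ} (hε : ε = 1 ∨ ε = -1) {c : ℤ}
    (ha : ε * coord e (f a) ≤ c) (hb : c ≤ ε * coord e (f b)) :
    ∃ σ, a ≤ σ ∧ σ ≤ b ∧ ε * coord e (f σ) = c := by
  obtain ⟨σ, h1, h2, h3, -⟩ := exists_hit_of_lipschitz hw.le hw.step
    (φ := fun u => ε * coord e u)
    (fun u v => le_of_abs_le (abs_signed_coord_sub_le hε e u v)) ha hb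
  exact ⟨σ, h1, h2, h3⟩

lemma exists_isExitWalk_of_chain {P : List Vertex} (hP : P.IsChain adj) {z w : Vertex}
    (hz : P.head? = some z) (hw : P.getLast? = some w) {r : ℤ} (hr0 : 0 ≤ r)
    (hr : r ≤ dinf z w) :
    ∃ β, IsExitWalk (fun t => P.getD t 0) 0 β r ∧
      (Finset.Icc 0 β).image (fun t => P.getD t 0) ⊆ P.toFinset := by
  have hlen : 0 < P.length := List.length_pos_iff.mpr (by rintro rfl; simp at hz)
  have h0 : P.getD 0 0 = z := by
    rw [List.getD_eq_getElem?_getD, ← List.head?_eq_getElem?, hz]; rfl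
  have hlast : P.getD (P.length - 1) 0 = w := by
    rw [List.getD_eq_getElem?_getD, ← List.getLast?_eq_getElem?, hw]; rfl
  obtain ⟨β, hβ, hexit⟩ := exists_isExitWalk (f := fun t => P.getD t 0) (Nat.zero_le (P.length - 1))
    (fun t _ ht => by
      simp only [List.getD_eq_getElem _ _ (by omega : t < P.length),
        List.getD_eq_getElem _ _ (by omega : t + 1 < P.length)]
      exact dinf_le_of_adj (List.isChain_iff_getElem.mp hP t (by omega)))
    hr0 (by rwa [h0, hlast, dinf_comm])
  refine ⟨β, hexit, fun x hx => ?_⟩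
  obtain ⟨t, ht, rfl⟩ := Finset.mem_image.mp hx
  rw [Finset.mem_Icc] at ht
  simp only [List.getD_eq_getElem _ _ (by omega : t < P.length), List.mem_toFinset]
  exact List.getElem_mem _

/-! ### Scales -/

lemma four_mul_Kone {k : ℕ} (hk : 2 ≤ k) : 4 * Kone k = 2 ^ k := by
  rw [Kone, show (4 : ℕ) = 2 ^ 2 from rfl, ← pow_add, Nat.add_sub_cancel' hk]

lemma Kone_pos (k : ℕ) : 0 < Kone k := Nat.two_pow_pos _

lemma Kone_pow_sub {k j j' : ℕ} (h : j' ≤ j) :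
    Kone k ^ (j + 1 - j') = Kone k * Kone k ^ (j - j') := by
  rw [show j + 1 - j' = j - j' + 1 by omega, pow_succ, mul_comm]

lemma four_mul_two_pow_le {k j' j : ℕ} (hk : 2 ≤ k) (h : j' < j) :
    4 * (2 : ℤ) ^ (j' * k) ≤ 2 ^ (j * k) := by
  calc 4 * (2 : ℤ) ^ (j' * k) = 2 ^ (2 + j' * k) := by rw [pow_add]; norm_num
    _ ≤ 2 ^ (j * k) := pow_le_pow_right₀ (by norm_num) (by nlinarith)

/-- A walk leaving the ball of this radius carries a nest of depth `j`; the slack `2^{(j-1)k}`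
below `2^{jk}` makes room for the children, so that the nest stays within `2^{jk}` of the centre. -/
def exitRadius (k j : ℕ) : ℤ := 2 ^ (j * k) - 2 ^ ((j - 1) * k)

lemma exitRadius_nonneg (k j : ℕ) : 0 ≤ exitRadius k j :=
  sub_nonneg.mpr (pow_le_pow_right₀ (by norm_num) (Nat.mul_le_mul_right _ (Nat.sub_le _ _)))

lemma exitRadius_le (k j : ℕ) : exitRadius k j ≤ 2 ^ (j * k) :=
  sub_le_self _ (by positivity)

lemma exists_dvd_mem_Ico (x : ℤ) {s : ℤ} (hs : 0 < s) : ∃ A, s ∣ A ∧ x ≤ A ∧ A < x + s :=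
  ⟨-(s * (-x / s)), (dvd_mul_right s _).neg_right,
    by linarith [Int.mul_ediv_self_le (x := -x) hs.ne'],
    by linarith [Int.lt_mul_ediv_self_add (x := -x) hs]⟩

lemma one_le_jzero {δ : ℝ} (hδ0 : 0 < δ) (hδ1 : δ < 1) {n k : ℕ} (hk : 0 < k) (hn : 2 * k ≤ n) :
    1 ≤ jzero δ n k := by
  have hm : (2 : ℝ) ≤ (n / k : ℕ) := by exact_mod_cast (Nat.le_div_iff_mul_le hk).mpr (by omega)
  have hδ2 : δ ^ 2 < 1 := by nlinarith
  exact Nat.le_floor (by push_cast; nlinarith)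

lemma two_pow_jzero_mul_le {δ κ : ℝ} (hδ0 : 0 < δ) (hδ1 : δ < 1) (hκ : κ < δ ^ 2 / 2) (n k : ℕ) :
    (2 : ℝ) ^ (jzero δ n k * k) ≤ ((2 : ℝ) ^ n) ^ (1 - κ) := by
  have hδ2 : δ ^ 2 < 1 := by nlinarith
  have hj : (jzero δ n k : ℝ) ≤ (1 - δ ^ 2 / 2) * (n / k : ℕ) :=
    Nat.floor_le (by have := (n / k : ℕ).cast_nonneg (α := ℝ); nlinarith)
  have hmk : ((n / k : ℕ) : ℝ) * k ≤ n := by exact_mod_cast Nat.div_mul_le_self n k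
  rw [← Real.rpow_natCast, ← Real.rpow_natCast, ← Real.rpow_mul (by norm_num)]
  apply Real.rpow_le_rpow_of_exponent_le one_le_two
  push_cast
  have hk0 : (0 : ℝ) ≤ k := k.cast_nonneg
  have hn0 : (0 : ℝ) ≤ n := n.cast_nonneg
  nlinarith [mul_le_mul_of_nonneg_right hj hk0]

/-! ### Nests -/

/-- `T j' h` is the lower-left corner of the box `B_{j',h}`, `1 ≤ h ≤ K₁^(j - j')`. -/
structure IsNest (k q j : ℕ) (T : ℕ → ℕ → Vertex) (Q : Finset Vertex) : Prop where
  aligned : ∀ j' h : ℕ, 1 ≤ j' → j' ≤ j → 1 ≤ h → h ≤ Kone k ^ (j - j') →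
    ∃ c : ℤ × ℤ, T j' h = (2 ^ (j' * k) * c.1, 2 ^ (j' * k) * c.2)
  separated : ∀ z ∈ Q, ∀ w ∈ Q, z ≠ w → (q : ℤ) < dinf z w
  apart : ∀ j' : ℕ, 1 ≤ j' → j' ≤ j →
    ∀ h h' : ℕ, 1 ≤ h → h ≤ Kone k ^ (j - j') → 1 ≤ h' → h' ≤ Kone k ^ (j - j') → h ≠ h' →
      ∀ z ∈ starBox (T j' h) (2 ^ (j' * k)), ∀ w ∈ starBox (T j' h') (2 ^ (j' * k)),
        (2 ^ (j' * k) : ℤ) < dinf z w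
  card_eq : Q.card = Kone k ^ (j - 1) * Ktwo k q
  covered : ∀ j' : ℕ, 1 ≤ j' → j' ≤ j → ∀ x ∈ Q, ∃ h : ℕ, 1 ≤ h ∧ h ≤ Kone k ^ (j - j') ∧
    x ∈ starBox (T j' h) (2 ^ (j' * k))
  card_inter : ∀ j' : ℕ, 1 ≤ j' → j' ≤ j → ∀ h : ℕ, 1 ≤ h → h ≤ Kone k ^ (j - j') →
    (Q ∩ starBox (T j' h) (2 ^ (j' * k))).card = Kone k ^ (j' - 1) * Ktwo k q

structure IsAnchoredNest (k q j : ℕ) (p : Vertex) (T : ℕ → ℕ → Vertex) (Q : Finset Vertex) : Prop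
    extends IsNest k q j T Q where
  top : T j 1 = alignedCorner (2 ^ (j * k)) p
  near : ∀ x ∈ Q, dinf x p ≤ 2 ^ (j * k)
  boxes_near : ∀ j' h : ℕ, 1 ≤ j' → j' ≤ j → 1 ≤ h → h ≤ Kone k ^ (j - j') →
    ∀ z ∈ starBox (T j' h) (2 ^ (j' * k)), dinf z p ≤ 2 ^ (j * k) + 2 ^ (j' * k) - 1

section Construction

variable {k q : ℕ} {f : ℕ → Vertex}

/-- Depth one: `K₂` points of the walk whose signed coordinates are `q + 1` apart. -/
lemma IsExitWalk.exists_separated_finset {a b : ℕ} (hw : IsExitWalk f a b (exitRadius k 1)) :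
    ∃ Q ⊆ (Finset.Icc a b).image f, Q.card = Ktwo k q ∧
      (∀ z ∈ Q, ∀ w ∈ Q, z ≠ w → (q : ℤ) < dinf z w) ∧ ∀ x ∈ Q, dinf x (f a) ≤ 2 ^ (1 * k) := by
  obtain ⟨e, ε, hε, hb⟩ := hw.exists_signed_coord
  have hK : Ktwo k q * (q + 1) ≤ 2 ^ k := Nat.div_mul_le_self _ _
  have hpt : ∀ i < Ktwo k q, ∃ t, a ≤ t ∧ t ≤ b ∧
      ε * coord e (f t) = ε * coord e (f a) + (q + 1) * i := by
    intro i hi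
    have hi' : ((q + 1) * (i + 1) : ℤ) ≤ 2 ^ k := by
      exact_mod_cast (Nat.mul_le_mul_left (q + 1) hi).trans (by rw [mul_comm]; exact hK)
    have hnn : (0 : ℤ) ≤ (q + 1) * i := by positivity
    apply hw.exists_signed_coord_hit hε (by linarith)
    rw [hb, exitRadius]
    norm_num
    linarith
  choose! t hat htb ht using hpt
  have hsep : ∀ i < Ktwo k q, ∀ i' < Ktwo k q, i ≠ i' → (q : ℤ) < dinf (f (t i)) (f (t i')) := by
    intro i hi i' hi' hne
    have hone : 1 ≤ |(i : ℤ) - i'| := Int.one_le_abs (sub_ne_zero.mpr (by exact_mod_cast hne))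
    have := abs_signed_coord_sub_le hε e (f (t i)) (f (t i'))
    rw [ht i hi, ht i' hi', add_sub_add_left_eq_sub, ← mul_sub, abs_mul,
      abs_of_pos (by positivity)] at this
    nlinarith
  refine ⟨(Finset.range (Ktwo k q)).image (f ∘ t), ?_, ?_, ?_, ?_⟩
  · simp only [Finset.subset_iff, Finset.mem_image, Finset.mem_range, Finset.mem_Icc]
    rintro _ ⟨i, hi, rfl⟩
    exact ⟨t i, ⟨hat i hi, htb i hi⟩, rfl⟩
  · rw [Finset.card_image_of_injOn, Finset.card_range]
    intro i hi i' hi' heq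
    by_contra hne
    have := hsep i (by simpa using hi) i' (by simpa using hi') hne
    simp only [Function.comp_apply] at heq
    rw [heq, dinf_self] at this
    omega
  · simp only [Finset.mem_image, Finset.mem_range]
    rintro _ ⟨i, hi, rfl⟩ _ ⟨i', hi', rfl⟩ hne
    exact hsep i hi i' hi' fun h => hne (by rw [h])
  · simp only [Finset.mem_image, Finset.mem_range]
    rintro _ ⟨i, hi, rfl⟩
    have := hw.stays (t i) (hat i hi) (htb i hi)
    rw [exitRadius] at this
    norm_num at this ⊢
    linarith

lemma isAnchoredNest_one {p : Vertex} {Q : Finset Vertex} (hcard : Q.card = Ktwo k q)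
    (hsep : ∀ z ∈ Q, ∀ w ∈ Q, z ≠ w → (q : ℤ) < dinf z w)
    (hnear : ∀ x ∈ Q, dinf x p ≤ 2 ^ (1 * k)) :
    IsAnchoredNest k q 1 p (fun _ _ => alignedCorner (2 ^ (1 * k)) p) Q := by
  have hQ := subset_starBox_alignedCorner hnear
  refine ⟨⟨?_, hsep, ?_, by simpa using hcard, ?_, ?_⟩, rfl, hnear, ?_⟩
  · intro j' h h1 h2 _ _
    obtain rfl : j' = 1 := by omega
    exact exists_alignedCorner_two_pow_eq _ _
  · intro j' h1 h2 h h' _ hh _ hh' hne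
    obtain rfl : j' = 1 := by omega
    simp only [Nat.sub_self, pow_zero] at hh hh'
    omega
  · intro j' h1 h2 x hx
    obtain rfl : j' = 1 := by omega
    exact ⟨1, le_rfl, by simp, hQ hx⟩
  · intro j' h1 h2 h _ _
    obtain rfl : j' = 1 := by omega
    rw [Finset.inter_eq_left.mpr hQ]
    simpa using hcard
  · intro j' h h1 h2 _ _ z hz
    obtain rfl : j' = 1 := by omega
    have := dinf_le_of_mem_starBox_alignedCorner_two_pow hz
    linarith

theorem exists_anchoredNest_one {a b : ℕ} (hw : IsExitWalk f a b (exitRadius k 1)) :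
    ∃ T Q, IsAnchoredNest k q 1 (f a) T Q ∧ Q ⊆ (Finset.Icc a b).image f := by
  obtain ⟨Q, hQ, hcard, hsep, hnear⟩ := hw.exists_separated_finset (q := q)
  exact ⟨_, Q, isAnchoredNest_one hcard hsep hnear, hQ⟩

/-! ### Gluing children -/

/-- The boxes of the nest glued from children `T c`, `c < K₁`: at a level `j' ≤ j` the index
`h = c * K₁^(j-j') + h₁` selects box `h₁` of child `c`. -/
def gluedBoxes (k j : ℕ) (p : Vertex) (T : ℕ → ℕ → ℕ → Vertex) (j' h : ℕ) : Vertex :=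
  if j' = j + 1 then alignedCorner (2 ^ ((j + 1) * k)) p
  else T ((h - 1) / Kone k ^ (j - j')) j' ((h - 1) % Kone k ^ (j - j') + 1)

section gluedBoxes

variable {j j' h : ℕ} {p : Vertex} {T : ℕ → ℕ → ℕ → Vertex}

lemma gluedBoxes_top : gluedBoxes k j p T (j + 1) h = alignedCorner (2 ^ ((j + 1) * k)) p :=
  if_pos rfl

lemma exists_gluedBoxes_eq (hj' : j' ≤ j) (hh : 1 ≤ h) (hhK : h ≤ Kone k ^ (j + 1 - j')) :
    ∃ c < Kone k, ∃ h₁, 1 ≤ h₁ ∧ h₁ ≤ Kone k ^ (j - j') ∧ h = c * Kone k ^ (j - j') + h₁ ∧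
      gluedBoxes k j p T j' h = T c j' h₁ := by
  rw [Kone_pow_sub hj'] at hhK
  have hE : 0 < Kone k ^ (j - j') := pow_pos (Kone_pos k) _
  refine ⟨(h - 1) / Kone k ^ (j - j'), Nat.div_lt_of_lt_mul (by rw [mul_comm]; omega), _,
    Nat.le_add_left _ _, Nat.mod_lt _ hE, ?_, if_neg (by omega)⟩
  have := Nat.div_add_mod (h - 1) (Kone k ^ (j - j'))
  rw [mul_comm] at this
  omega

lemma gluedBoxes_mul_add {c h₁ : ℕ} (hj' : j' ≤ j) (hh₁ : 1 ≤ h₁)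
    (hh₁' : h₁ ≤ Kone k ^ (j - j')) :
    gluedBoxes k j p T j' (c * Kone k ^ (j - j') + h₁) = T c j' h₁ := by
  have hdecomp : c * Kone k ^ (j - j') + h₁ - 1 = (h₁ - 1) + Kone k ^ (j - j') * c := by
    rw [mul_comm]; omega
  rw [gluedBoxes, if_neg (by omega), hdecomp, Nat.add_mul_div_left _ _ (by omega),
    Nat.add_mul_mod_self_left, Nat.div_eq_of_lt (by omega), Nat.mod_eq_of_lt (by omega),
    zero_add, Nat.sub_add_cancel hh₁]

end gluedBoxes

structure ChildNests (k q j : ℕ) (p : Vertex) (e : Bool) (ζ : ℕ → Vertex)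
    (T : ℕ → ℕ → ℕ → Vertex) (Q : ℕ → Finset Vertex) : Prop where
  nest : ∀ c < Kone k, IsAnchoredNest k q j (ζ c) (T c) (Q c)
  near : ∀ c < Kone k, dinf (ζ c) p ≤ exitRadius k (j + 1)
  dvd : ∀ c < Kone k, (2 : ℤ) ^ (j * k) ∣ coord e (ζ c)
  apart : ∀ c < Kone k, ∀ c' < Kone k, c ≠ c' →
    4 * 2 ^ (j * k) ≤ |coord e (ζ c) - coord e (ζ c')|

namespace ChildNests

variable {j : ℕ} {p : Vertex} {e : Bool} {ζ : ℕ → Vertex} {T : ℕ → ℕ → ℕ → Vertex}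
  {Q : ℕ → Finset Vertex}

lemma four_mul_le_dinf {c c' : ℕ} (H : ChildNests k q j p e ζ T Q) (hc : c < Kone k)
    (hc' : c' < Kone k) (hne : c ≠ c') : 4 * 2 ^ (j * k) ≤ dinf (ζ c) (ζ c') :=
  (H.apart c hc c' hc' hne).trans (abs_coord_sub_le_dinf e _ _)

lemma two_mul_le_dinf {c c' : ℕ} (H : ChildNests k q j p e ζ T Q) (hc : c < Kone k)
    (hc' : c' < Kone k) (hne : c ≠ c') {x y : Vertex} (hx : x ∈ Q c) (hy : y ∈ Q c') :
    2 * 2 ^ (j * k) ≤ dinf x y := by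
  have := H.four_mul_le_dinf hc hc' hne
  have := (H.nest c hc).near x hx
  have := (H.nest c' hc').near y hy
  have := dinf_triangle (ζ c) x (ζ c')
  have := dinf_triangle x y (ζ c')
  rw [dinf_comm (ζ c) x] at *
  linarith

/-- At the top level `j` of the children their boxes are far apart because the anchors lie on
the grid `2^{jk} ℤ` and `4 · 2^{jk}` apart in the coordinate `e`; below it because every box
stays near its anchor. -/
lemma lt_dinf_of_ne {c c' j' h₁ h₂ : ℕ} (hk : 2 ≤ k) (H : ChildNests k q j p e ζ T Q)
    (hc : c < Kone k) (hc' : c' < Kone k) (hne : c ≠ c') (hj'1 : 1 ≤ j') (hj' : j' ≤ j)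
    (hh₁ : 1 ≤ h₁) (hh₁' : h₁ ≤ Kone k ^ (j - j')) (hh₂ : 1 ≤ h₂) (hh₂' : h₂ ≤ Kone k ^ (j - j'))
    {z w : Vertex} (hz : z ∈ starBox (T c j' h₁) (2 ^ (j' * k)))
    (hw : w ∈ starBox (T c' j' h₂) (2 ^ (j' * k))) : (2 ^ (j' * k) : ℤ) < dinf z w := by
  rcases hj'.eq_or_lt with rfl | hlt
  · obtain rfl : h₁ = 1 := by simp only [Nat.sub_self, pow_zero] at hh₁'; omega
    obtain rfl : h₂ = 1 := by simp only [Nat.sub_self, pow_zero] at hh₂'; omega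
    rw [(H.nest c hc).top] at hz
    rw [(H.nest c' hc').top] at hw
    have hcast : ((2 ^ (j' * k) : ℕ) : ℤ) = (2 : ℤ) ^ (j' * k) := by norm_num
    have hz' := coord_mem_of_mem_starBox_alignedCorner (by rw [hcast]; exact H.dvd c hc) hz
    have hw' := coord_mem_of_mem_starBox_alignedCorner (by rw [hcast]; exact H.dvd c' hc') hw
    rw [hcast] at hz' hw'
    refine (lt_abs.mpr ?_).trans_le (abs_coord_sub_le_dinf e z w)
    rcases le_abs'.mp (H.apart c hc c' hc' hne) with h | h
    · right; linarith
    · left; linarith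
  · have := H.four_mul_le_dinf hc hc' hne
    have := (H.nest c hc).boxes_near j' h₁ hj'1 hj' hh₁ hh₁' z hz
    have := (H.nest c' hc').boxes_near j' h₂ hj'1 hj' hh₂ hh₂' w hw
    have := four_mul_two_pow_le hk hlt
    have : (0 : ℤ) < 2 ^ (j' * k) := by positivity
    have := dinf_triangle (ζ c) z (ζ c')
    have := dinf_triangle z w (ζ c')
    rw [dinf_comm (ζ c) z] at *
    linarith

lemma separated (hqk : q + 1 ≤ 2 ^ k) (hj : 1 ≤ j) (H : ChildNests k q j p e ζ T Q) :
    ∀ z ∈ (Finset.range (Kone k)).biUnion Q, ∀ w ∈ (Finset.range (Kone k)).biUnion Q,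
      z ≠ w → (q : ℤ) < dinf z w := by
  simp only [Finset.mem_biUnion, Finset.mem_range]
  rintro z ⟨c, hc, hz⟩ w ⟨c', hc', hw⟩ hzw
  obtain rfl | hne := eq_or_ne c c'
  · exact (H.nest c hc).separated z hz w hw hzw
  · have := H.two_mul_le_dinf hc hc' hne hz hw
    have : (2 : ℤ) ^ k ≤ 2 ^ (j * k) := pow_le_pow_right₀ (by norm_num) (by nlinarith)
    have : ((q + 1 : ℕ) : ℤ) ≤ 2 ^ k := by exact_mod_cast hqk
    push_cast at this
    linarith

lemma card_biUnion (hj : 1 ≤ j) (H : ChildNests k q j p e ζ T Q) :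
    ((Finset.range (Kone k)).biUnion Q).card = Kone k ^ j * Ktwo k q := by
  rw [Finset.card_biUnion]
  · rw [Finset.sum_congr rfl fun c hc => (H.nest c (Finset.mem_range.mp hc)).card_eq,
      Finset.sum_const, Finset.card_range, smul_eq_mul, ← mul_assoc, ← pow_succ',
      Nat.sub_add_cancel hj]
  · intro c hc c' hc' hne
    refine Finset.disjoint_left.mpr fun x hx hx' => ?_
    have := H.two_mul_le_dinf (Finset.mem_range.mp hc) (Finset.mem_range.mp hc') hne hx hx'
    rw [dinf_self] at this
    have : (0 : ℤ) < 2 ^ (j * k) := by positivity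
    linarith

lemma biUnion_inter_starBox {c j' h : ℕ} (hk : 2 ≤ k) (H : ChildNests k q j p e ζ T Q)
    (hc : c < Kone k) (hj'1 : 1 ≤ j') (hj' : j' ≤ j) (hh : 1 ≤ h) (hh' : h ≤ Kone k ^ (j - j')) :
    (Finset.range (Kone k)).biUnion Q ∩ starBox (T c j' h) (2 ^ (j' * k)) =
      Q c ∩ starBox (T c j' h) (2 ^ (j' * k)) := by
  ext x
  simp only [Finset.mem_inter, Finset.mem_biUnion, Finset.mem_range]
  refine ⟨fun ⟨⟨c', hc', hx⟩, hxB⟩ => ⟨?_, hxB⟩, fun ⟨hx, hxB⟩ => ⟨⟨c, hc, hx⟩, hxB⟩⟩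
  obtain rfl | hne := eq_or_ne c' c
  · exact hx
  · obtain ⟨h', hh'1, hh'2, hxB'⟩ := (H.nest c' hc').covered j' hj'1 hj' x hx
    have := H.lt_dinf_of_ne hk hc' hc hne hj'1 hj' hh'1 hh'2 hh hh' hxB' hxB
    rw [dinf_self] at this
    have : (0 : ℤ) < 2 ^ (j' * k) := by positivity
    exact absurd this (by linarith)

lemma near_biUnion (H : ChildNests k q j p e ζ T Q) :
    ∀ x ∈ (Finset.range (Kone k)).biUnion Q, dinf x p ≤ 2 ^ ((j + 1) * k) := by
  simp only [Finset.mem_biUnion, Finset.mem_range]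
  rintro x ⟨c, hc, hx⟩
  have := (H.nest c hc).near x hx
  have := H.near c hc
  have := dinf_triangle x (ζ c) p
  simp only [exitRadius, Nat.add_sub_cancel] at *
  linarith

lemma apart_glued (hk : 2 ≤ k) (H : ChildNests k q j p e ζ T Q) {j' h h' : ℕ} (hj'1 : 1 ≤ j')
    (hj' : j' ≤ j + 1) (hh : 1 ≤ h) (hhK : h ≤ Kone k ^ (j + 1 - j')) (hh' : 1 ≤ h')
    (hh'K : h' ≤ Kone k ^ (j + 1 - j')) (hne : h ≠ h') {z w : Vertex}
    (hz : z ∈ starBox (gluedBoxes k j p T j' h) (2 ^ (j' * k)))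
    (hw : w ∈ starBox (gluedBoxes k j p T j' h') (2 ^ (j' * k))) :
    (2 ^ (j' * k) : ℤ) < dinf z w := by
  rcases (show j' ≤ j ∨ j' = j + 1 by omega) with hj' | rfl
  · obtain ⟨c, hc, h₁, hh₁, hh₁K, rfl, hT⟩ := exists_gluedBoxes_eq (p := p) (T := T) hj' hh hhK
    obtain ⟨c', hc', h₂, hh₂, hh₂K, rfl, hT'⟩ := exists_gluedBoxes_eq (p := p) (T := T) hj' hh' hh'K
    rw [hT] at hz
    rw [hT'] at hw
    obtain rfl | hcc := eq_or_ne c c'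
    · exact (H.nest c hc).apart j' hj'1 hj' h₁ h₂ hh₁ hh₁K hh₂ hh₂K (by omega) z hz w hw
    · exact H.lt_dinf_of_ne hk hc hc' hcc hj'1 hj' hh₁ hh₁K hh₂ hh₂K hz hw
  · simp only [Nat.sub_self, pow_zero] at hhK hh'K
    omega

lemma covered_glued (H : ChildNests k q j p e ζ T Q) {j' : ℕ} (hj'1 : 1 ≤ j') (hj' : j' ≤ j + 1)
    {x : Vertex} (hx : x ∈ (Finset.range (Kone k)).biUnion Q) :
    ∃ h, 1 ≤ h ∧ h ≤ Kone k ^ (j + 1 - j') ∧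
      x ∈ starBox (gluedBoxes k j p T j' h) (2 ^ (j' * k)) := by
  rcases (show j' ≤ j ∨ j' = j + 1 by omega) with hj' | rfl
  · obtain ⟨c, hc, hxc⟩ := Finset.mem_biUnion.mp hx
    rw [Finset.mem_range] at hc
    obtain ⟨h₁, hh₁, hh₁K, hxB⟩ := (H.nest c hc).covered j' hj'1 hj' x hxc
    refine ⟨c * Kone k ^ (j - j') + h₁, by omega, ?_, by rwa [gluedBoxes_mul_add hj' hh₁ hh₁K]⟩
    rw [Kone_pow_sub hj']
    nlinarith
  · exact ⟨1, le_rfl, by simp, gluedBoxes_top ▸ subset_starBox_alignedCorner H.near_biUnion hx⟩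

lemma card_inter_glued (hk : 2 ≤ k) (hj : 1 ≤ j) (H : ChildNests k q j p e ζ T Q) {j' h : ℕ}
    (hj'1 : 1 ≤ j') (hj' : j' ≤ j + 1) (hh : 1 ≤ h) (hhK : h ≤ Kone k ^ (j + 1 - j')) :
    ((Finset.range (Kone k)).biUnion Q ∩ starBox (gluedBoxes k j p T j' h) (2 ^ (j' * k))).card =
      Kone k ^ (j' - 1) * Ktwo k q := by
  rcases (show j' ≤ j ∨ j' = j + 1 by omega) with hj' | rfl
  · obtain ⟨c, hc, h₁, hh₁, hh₁K, -, hT⟩ := exists_gluedBoxes_eq (p := p) (T := T) hj' hh hhK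
    rw [hT, H.biUnion_inter_starBox hk hc hj'1 hj' hh₁ hh₁K]
    exact (H.nest c hc).card_inter j' hj'1 hj' h₁ hh₁ hh₁K
  · rw [gluedBoxes_top, Finset.inter_eq_left.mpr (subset_starBox_alignedCorner H.near_biUnion),
      H.card_biUnion hj, Nat.add_sub_cancel]

theorem glue (hk : 2 ≤ k) (hqk : q + 1 ≤ 2 ^ k) (hj : 1 ≤ j) (H : ChildNests k q j p e ζ T Q) :
    IsAnchoredNest k q (j + 1) p (gluedBoxes k j p T) ((Finset.range (Kone k)).biUnion Q) := by
  refine ⟨⟨?aligned, H.separated hqk hj, fun j' hj'1 hj' _ _ hh hhK hh' hh'K hne _ hz _ hw =>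
      H.apart_glued hk hj'1 hj' hh hhK hh' hh'K hne hz hw,
    by rw [H.card_biUnion hj, Nat.add_sub_cancel], fun j' hj'1 hj' _ => H.covered_glued hj'1 hj',
    fun j' hj'1 hj' h => H.card_inter_glued hk hj hj'1 hj'⟩, gluedBoxes_top, H.near_biUnion,
    ?boxes_near⟩
  case aligned =>
    intro j' h hj'1 hj' hh hhK
    rcases (show j' ≤ j ∨ j' = j + 1 by omega) with hj' | rfl
    · obtain ⟨c, hc, h₁, hh₁, hh₁K, -, hT⟩ := exists_gluedBoxes_eq (p := p) (T := T) hj' hh hhK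
      exact hT ▸ (H.nest c hc).aligned j' h₁ hj'1 hj' hh₁ hh₁K
    · exact gluedBoxes_top ▸ exists_alignedCorner_two_pow_eq _ _
  case boxes_near =>
    intro j' h hj'1 hj' hh hhK z hz
    rcases (show j' ≤ j ∨ j' = j + 1 by omega) with hj' | rfl
    · obtain ⟨c, hc, h₁, hh₁, hh₁K, -, hT⟩ := exists_gluedBoxes_eq (p := p) (T := T) hj' hh hhK
      rw [hT] at hz
      have := (H.nest c hc).boxes_near j' h₁ hj'1 hj' hh₁ hh₁K z hz
      have := H.near c hc
      have := dinf_triangle z (ζ c) p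
      simp only [exitRadius, Nat.add_sub_cancel] at *
      linarith
    · rw [gluedBoxes_top] at hz
      have := dinf_le_of_mem_starBox_alignedCorner_two_pow hz
      linarith

end ChildNests

/-! ### The construction along a path -/

/-- Along the signed coordinate realizing the exit, the walk passes the `K₁` levels
`A + 4c · 2^{jk}` (`c < K₁`) with `A` on the grid `2^{jk} ℤ`; each time it is still at least
`2^{jk}` away from its final exit point. -/
lemma IsExitWalk.exists_anchors (hk : 2 ≤ k) {j a b : ℕ}
    (hw : IsExitWalk f a b (exitRadius k (j + 1))) :
    ∃ (e : Bool) (τ : ℕ → ℕ),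
      (∀ c < Kone k, a ≤ τ c ∧ τ c ≤ b ∧ 2 ^ (j * k) ≤ dinf (f b) (f (τ c))) ∧
      (∀ c < Kone k, (2 : ℤ) ^ (j * k) ∣ coord e (f (τ c))) ∧
      (∀ c < Kone k, ∀ c' < Kone k, c ≠ c' →
        4 * 2 ^ (j * k) ≤ |coord e (f (τ c)) - coord e (f (τ c'))|) := by
  obtain ⟨e, ε, hε, hb⟩ := hw.exists_signed_coord
  set s : ℤ := 2 ^ (j * k) with hs
  have hR : exitRadius k (j + 1) = 4 * Kone k * s - s := by
    have h4 : (4 : ℤ) * Kone k = 2 ^ k := by exact_mod_cast four_mul_Kone hk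
    rw [exitRadius, Nat.add_sub_cancel, add_mul, one_mul, pow_add, hs, ← h4]
    ring
  obtain ⟨A, hAs, hA1, hA2⟩ := exists_dvd_mem_Ico (ε * coord e (f a)) (by positivity : 0 < s)
  have hhit : ∀ c < Kone k, ∃ τ, a ≤ τ ∧ τ ≤ b ∧ ε * coord e (f τ) = A + 4 * s * c := by
    intro c hc
    have hcK : (c : ℤ) + 1 ≤ Kone k := by exact_mod_cast hc
    have : 0 ≤ 4 * s * c := by positivity
    exact hw.exists_signed_coord_hit hε (by linarith) (by rw [hb, hR]; nlinarith)
  choose! τ haτ hτb hτ using hhit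
  have hζ : ∀ c < Kone k, coord e (f (τ c)) = ε * (A + 4 * s * c) := by
    intro c hc
    rcases hε with rfl | rfl <;> linarith [hτ c hc]
  refine ⟨e, τ, fun c hc => ⟨haτ c hc, hτb c hc, ?_⟩, fun c hc => ?_, fun c hc c' hc' hne => ?_⟩
  · have hcK : (c : ℤ) + 1 ≤ Kone k := by exact_mod_cast hc
    have := le_of_abs_le (abs_signed_coord_sub_le hε e (f b) (f (τ c)))
    rw [hb, hR, hτ c hc] at this
    nlinarith
  · rw [hζ c hc]
    exact (dvd_add hAs ⟨4 * c, by ring⟩).mul_left ε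
  · have hcc : (1 : ℤ) ≤ |(c : ℤ) - c'| := Int.one_le_abs (sub_ne_zero.mpr (by exact_mod_cast hne))
    rw [hζ c hc, hζ c' hc', ← mul_sub, abs_mul, show A + 4 * s * c - (A + 4 * s * c') =
      4 * s * (c - c') by ring, abs_mul, abs_of_pos (by positivity : 0 < 4 * s)]
    rcases hε with rfl | rfl <;> norm_num <;> nlinarith

/-- From each anchor the walk runs on until it exits the ball of radius `exitRadius k j`; the
nests built on these pieces are the children. -/
theorem exists_anchoredNest_succ (hk : 2 ≤ k) (hqk : q + 1 ≤ 2 ^ k) {j : ℕ} (hj : 1 ≤ j)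
    (ih : ∀ a b, IsExitWalk f a b (exitRadius k j) →
      ∃ T Q, IsAnchoredNest k q j (f a) T Q ∧ Q ⊆ (Finset.Icc a b).image f)
    {a b : ℕ} (hw : IsExitWalk f a b (exitRadius k (j + 1))) :
    ∃ T Q, IsAnchoredNest k q (j + 1) (f a) T Q ∧ Q ⊆ (Finset.Icc a b).image f := by
  obtain ⟨e, τ, hτ, hdvd, hapart⟩ := hw.exists_anchors hk
  have hchild : ∀ c < Kone k, ∃ β T Q, β ≤ b ∧
      IsAnchoredNest k q j (f (τ c)) T Q ∧ Q ⊆ (Finset.Icc (τ c) β).image f := by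
    intro c hc
    obtain ⟨haτ, hτb, hfar⟩ := hτ c hc
    obtain ⟨β, hβb, hβ⟩ := exists_isExitWalk hτb (fun t ht htb => hw.step t (haτ.trans ht) htb)
      (exitRadius_nonneg k j) ((exitRadius_le k j).trans hfar)
    obtain ⟨T, Q, hN, hQ⟩ := ih (τ c) β hβ
    exact ⟨β, T, Q, hβb, hN, hQ⟩
  choose! β T Q hβb hN hQ using hchild
  refine ⟨gluedBoxes k j (f a) T, (Finset.range (Kone k)).biUnion Q,
    ChildNests.glue hk hqk hj
      ⟨hN, fun c hc => hw.stays (τ c) (hτ c hc).1 (hτ c hc).2.1, hdvd, hapart⟩, ?_⟩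
  intro x hx
  obtain ⟨c, hc, hxc⟩ := Finset.mem_biUnion.mp hx
  rw [Finset.mem_range] at hc
  obtain ⟨t, ht, rfl⟩ := Finset.mem_image.mp (hQ c hc hxc)
  rw [Finset.mem_Icc] at ht
  exact Finset.mem_image_of_mem f
    (Finset.mem_Icc.mpr ⟨(hτ c hc).1.trans ht.1, ht.2.trans (hβb c hc)⟩)

theorem exists_anchoredNest (hk : 2 ≤ k) (hqk : q + 1 ≤ 2 ^ k) {j : ℕ} (hj : 1 ≤ j) {a b : ℕ}
    (hw : IsExitWalk f a b (exitRadius k j)) :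
    ∃ T Q, IsAnchoredNest k q j (f a) T Q ∧ Q ⊆ (Finset.Icc a b).image f := by
  induction j, hj using Nat.le_induction generalizing a b with
  | base => exact exists_anchoredNest_one hw
  | succ j hj ih => exact exists_anchoredNest_succ hk hqk hj (fun _ _ => ih) hw

end Construction

theorem statement9_general (δ κ : ℝ) (hδ0 : 0 < δ) (hδ1 : δ < 1) (hκ : κ < δ ^ 2 / 2)
    (q : ℕ) :
    ∃ k' : ℕ, ∀ k : ℕ, k' ≤ k → ∀ᶠ n : ℕ in atTop,
      ∀ P : List Vertex, IsPathIn (2 ^ n) P →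
        (∃ z w : Vertex, P.head? = some z ∧ P.getLast? = some w ∧
            ((2 : ℝ) ^ n) ^ ((1 : ℝ) - κ) ≤ (dinf z w : ℝ)) →
        ∃ Q : Finset Vertex, Q ⊆ P.toFinset ∧
        ∃ Bc : ℕ → ℕ → Vertex,
          (∀ j h : ℕ, 1 ≤ j → j ≤ jzero δ n k → 1 ≤ h → h ≤ Kone k ^ (jzero δ n k - j) →
              ∃ c : ℤ × ℤ, Bc j h = (2 ^ (j * k) * c.1, 2 ^ (j * k) * c.2)) ∧
          (∀ z ∈ Q, ∀ w ∈ Q, z ≠ w → (q : ℤ) < dinf z w) ∧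
          (∀ j : ℕ, 1 ≤ j → j ≤ jzero δ n k - 1 →
              ∀ h h' : ℕ, 1 ≤ h → h ≤ Kone k ^ (jzero δ n k - j) →
                1 ≤ h' → h' ≤ Kone k ^ (jzero δ n k - j) → h ≠ h' →
                ∀ z ∈ starBox (Bc j h) (2 ^ (j * k)), ∀ w ∈ starBox (Bc j h') (2 ^ (j * k)),
                  (2 ^ (j * k) : ℤ) < dinf z w) ∧
          Q.card = Kone k ^ (jzero δ n k - 1) * Ktwo k q ∧
          (∀ j : ℕ, 1 ≤ j → j ≤ jzero δ n k →
            (∀ x ∈ Q, ∃ h : ℕ, 1 ≤ h ∧ h ≤ Kone k ^ (jzero δ n k - j) ∧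
                x ∈ starBox (Bc j h) (2 ^ (j * k))) ∧
            (∀ h : ℕ, 1 ≤ h → h ≤ Kone k ^ (jzero δ n k - j) →
                (Q ∩ starBox (Bc j h) (2 ^ (j * k))).card = Kone k ^ (j - 1) * Ktwo k q)) := by
  refine ⟨q + 2, fun k hk => ?_⟩
  have hqk : q + 1 ≤ 2 ^ k :=
    Nat.lt_two_pow_self.trans_le (Nat.pow_le_pow_right (by norm_num) (by omega))
  filter_upwards [eventually_ge_atTop (2 * k)] with n hn
  rintro P ⟨-, -, hP⟩ ⟨z, w, hz, hw, hzw⟩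
  have hj₀ := one_le_jzero hδ0 hδ1 (by omega) hn
  have hdist : (2 : ℤ) ^ (jzero δ n k * k) ≤ dinf z w := by
    exact_mod_cast (two_pow_jzero_mul_le hδ0 hδ1 hκ n k).trans hzw
  obtain ⟨β, hexit, hP⟩ := exists_isExitWalk_of_chain hP hz hw (exitRadius_nonneg _ _)
    ((exitRadius_le _ _).trans hdist)
  obtain ⟨T, Q, hN, hQ⟩ := exists_anchoredNest (by omega) hqk hj₀ hexit
  exact ⟨Q, hQ.trans hP, T, hN.aligned, hN.separated, fun j hj hj' => hN.apart j hj (by omega),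
    hN.card_eq, fun j hj hj' => ⟨hN.covered j hj hj', hN.card_inter j hj hj'⟩⟩

/-- **Proposition 2.9 (k-block-nest).** For k ≥ k′(q) and n large, from every path P in V_N of
distance at least N^{1-κ} one can extract an output set Q ⊆ P and families of j-blocks
B_{j,h} ∈ 𝓑𝓓_{jk} (1 ≤ j ≤ j₀, 1 ≤ h ≤ K₁^{j₀-j}) such that:
(a) distinct points of Q have ℓ∞-distance greater than q;
(b) for 1 ≤ j ≤ j₀-1 and h ≠ h′, d(B*_{j,h}, B*_{j,h′}) > 2^{jk};
(c) |Q| = K₁^{j₀-1} K₂ and for each j, Q = ⋃_h (Q ∩ B*_{j,h}) with |Q ∩ B*_{j,h}| = K₁^{j-1} K₂. -/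
theorem statement9 (δ κ : ℝ) (hδ0 : 0 < δ) (hδ1 : δ < 1) (hκ0 : 0 < κ) (hκ : κ < δ ^ 2 / 2)
    (q : ℕ) (hq : 1 ≤ q) :
    ∃ k' : ℕ, ∀ k : ℕ, k' ≤ k → ∀ᶠ n : ℕ in atTop,
      ∀ P : List Vertex, IsPathIn (2 ^ n) P →
        (∃ z w : Vertex, P.head? = some z ∧ P.getLast? = some w ∧
            ((2 : ℝ) ^ n) ^ ((1 : ℝ) - κ) ≤ (dinf z w : ℝ)) →
        ∃ Q : Finset Vertex, Q ⊆ P.toFinset ∧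
        ∃ Bc : ℕ → ℕ → Vertex,
          (∀ j h : ℕ, 1 ≤ j → j ≤ jzero δ n k → 1 ≤ h → h ≤ Kone k ^ (jzero δ n k - j) →
              ∃ c : ℤ × ℤ, Bc j h = (2 ^ (j * k) * c.1, 2 ^ (j * k) * c.2)) ∧
          (∀ z ∈ Q, ∀ w ∈ Q, z ≠ w → (q : ℤ) < dinf z w) ∧
          (∀ j : ℕ, 1 ≤ j → j ≤ jzero δ n k - 1 →
              ∀ h h' : ℕ, 1 ≤ h → h ≤ Kone k ^ (jzero δ n k - j) →
                1 ≤ h' → h' ≤ Kone k ^ (jzero δ n k - j) → h ≠ h' →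
                ∀ z ∈ starBox (Bc j h) (2 ^ (j * k)), ∀ w ∈ starBox (Bc j h') (2 ^ (j * k)),
                  (2 ^ (j * k) : ℤ) < dinf z w) ∧
          Q.card = Kone k ^ (jzero δ n k - 1) * Ktwo k q ∧
          (∀ j : ℕ, 1 ≤ j → j ≤ jzero δ n k →
            (∀ x ∈ Q, ∃ h : ℕ, 1 ≤ h ∧ h ≤ Kone k ^ (jzero δ n k - j) ∧
                x ∈ starBox (Bc j h) (2 ^ (j * k))) ∧
            (∀ h : ℕ, 1 ≤ h → h ≤ Kone k ^ (jzero δ n k - j) →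
                (Q ∩ starBox (Bc j h) (2 ^ (j * k))).card = Kone k ^ (j - 1) * Ktwo k q)) :=
  statement9_general δ κ hδ0 hδ1 hκ q

end
end
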